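/- arXiv:2210.09278 — 3 statements merged into one kernel-verified Lean document; each statement's English description precedes it below -/
import Mathlib

section
/- Let V be a real vector space, μ : V × V → ℝ a symmetric positive semidefinite bilinear form, and σ : V × V → ℝ an antisymmetric bilinear form satisfying σ(x,y)² ≤ 4 μ(x,x) μ(y,y) for all x, y ∈ V. Define ω on the complexification V_ℂ as the sesquilinear extension of ω(x,y) = μ(x,y) + (1/2) i σ(x,y). Then ω is positive semidefinite: ω(z,z) ≥ 0 (i.e. ω(z,z) is real and nonnegative) for every z ∈ V_ℂ. -/
/-! For `z = x + i y` the imaginary parts cancel by (anti)symmetry and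
`ω(z, z) = μ(x, x) + μ(y, y) - σ(x, y)`; the bound `σ(x, y)² ≤ 4 μ(x, x) μ(y, y)` gives
`|σ(x, y)| ≤ 2 √(μ(x, x) μ(y, y)) ≤ μ(x, x) + μ(y, y)`. -/

open Complex

theorem abs_le_add_of_sq_le_four_mul {a b s : ℝ} (ha : 0 ≤ a) (hb : 0 ≤ b)
    (hs : s ^ 2 ≤ 4 * a * b) : |s| ≤ a + b :=
  abs_le_of_sq_le_sq (by nlinarith [sq_nonneg (a - b)]) (add_nonneg ha hb)

theorem complexification_diag_eq {V : Type*} (μ σ : V → V → ℝ)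
    (hμ : ∀ x y, μ x y = μ y x) (hσ : ∀ x y, σ x y = -σ y x)
    (ω0 : V → V → ℂ) (hω0 : ∀ x y, ω0 x y = (μ x y : ℂ) + (I / 2) * (σ x y : ℂ)) (x y : V) :
    ω0 x x + ω0 y y + I * ω0 x y - I * ω0 y x = ((μ x x + μ y y - σ x y : ℝ) : ℂ) := by
  have hσxx : σ x x = 0 := by linarith [hσ x x]
  have hσyy : σ y y = 0 := by linarith [hσ y y]
  simp only [hω0, hσxx, hσyy, hμ y x, hσ y x]
  push_cast
  linear_combination (σ x y : ℂ) * I_sq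

theorem stmt4 {V : Type*} [AddCommGroup V] [Module ℝ V]
    (μ σ : V →ₗ[ℝ] V →ₗ[ℝ] ℝ)
    (hμsymm : ∀ x y, μ x y = μ y x) (hμpos : ∀ x, 0 ≤ μ x x)
    (hσanti : ∀ x y, σ x y = - σ y x)
    (hbound : ∀ x y, (σ x y) ^ 2 ≤ 4 * (μ x x) * (μ y y))
    (ω0 : V → V → ℂ)
    (hω0 : ∀ x y, ω0 x y = (μ x y : ℂ) + (Complex.I / 2) * (σ x y : ℂ))
    (ω : (V × V) → (V × V) → ℂ)
    (hω : ∀ z w, ω z w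
        = ω0 z.1 w.1 + ω0 z.2 w.2 + Complex.I * ω0 z.1 w.2 - Complex.I * ω0 z.2 w.1) :
    ∀ z, 0 ≤ (ω z z).re ∧ (ω z z).im = 0 := by
  rintro ⟨x, y⟩
  have hσ_le : σ x y ≤ μ x x + μ y y :=
    (le_abs_self _).trans (abs_le_add_of_sq_le_four_mul (hμpos x) (hμpos y) (hbound x y))
  rw [hω, complexification_diag_eq (fun a b => μ a b) (fun a b => σ a b) hμsymm hσanti ω0 hω0,
    ofReal_re, ofReal_im]
  exact ⟨by linarith, rfl⟩
end

section
/- Let V₀, V₁, V₂ be real inner product spaces, d₀ : V₀ → V₁, d₁ : V₁ → V₂ linear maps with (formal) adjoints δ₁ : V₁ → V₀, δ₂ : V₂ → V₁, i.e. ⟨d₀ a, b⟩ = ⟨a, δ₁ b⟩ and ⟨d₁ b, c⟩ = ⟨b, δ₂ c⟩ for all relevant vectors. Set Δ₀ = δ₁∘d₀ and Δ₁ = δ₂∘d₁ + d₀∘δ₁, and let m ∈ ℝ. Suppose a₀, π₀ ∈ V₀ and a₁, π₁ ∈ V₁ satisfy the constraints π₀ = −δ₁ a₁ and (Δ₀ +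 m²) a₀ = δ₁ π₁. Then ⟨π₁, π₁⟩ + ⟨a₁, (Δ₁ + m²) a₁⟩ − ⟨π₀, π₀⟩ − ⟨a₀, (Δ₀ + m²) a₀⟩ = ‖π₁ − d₀ a₀‖² + ‖d₁ a₁‖² + m² (‖a₁‖² + ‖a₀‖²). In particular the left-hand side is nonnegative. -/
open scoped RealInnerProductSpace

section AdjointPair

variable {E F : Type*} [NormedAddCommGroup E] [InnerProductSpace ℝ E]
  [NormedAddCommGroup F] [InnerProductSpace ℝ F] {d : E →ₗ[ℝ] F} {δ : F →ₗ[ℝ] E}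

lemma inner_adjoint_apply_add_smul_self (hadj : ∀ a b, ⟪d a, b⟫ = ⟪a, δ b⟫) (c : ℝ) (a : E) :
    ⟪a, δ (d a) + c • a⟫ = ‖d a‖ ^ 2 + c * ‖a‖ ^ 2 := by
  rw [inner_add_right, ← hadj, real_inner_smul_right, real_inner_self_eq_norm_sq,
    real_inner_self_eq_norm_sq]

lemma inner_apply_adjoint_self (hadj : ∀ a b, ⟪d a, b⟫ = ⟪a, δ b⟫) (b : F) :
    ⟪b, d (δ b)⟫ = ‖δ b‖ ^ 2 := by
  rw [real_inner_comm, hadj, real_inner_self_eq_norm_sq]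

end AdjointPair

lemma inner_hodgeLaplacian_add_smul_self {V0 V1 V2 : Type*}
    [NormedAddCommGroup V0] [InnerProductSpace ℝ V0]
    [NormedAddCommGroup V1] [InnerProductSpace ℝ V1]
    [NormedAddCommGroup V2] [InnerProductSpace ℝ V2]
    {d0 : V0 →ₗ[ℝ] V1} {d1 : V1 →ₗ[ℝ] V2} {δ1 : V1 →ₗ[ℝ] V0} {δ2 : V2 →ₗ[ℝ] V1}
    (hadj0 : ∀ a b, ⟪d0 a, b⟫ = ⟪a, δ1 b⟫) (hadj1 : ∀ b c, ⟪d1 b, c⟫ = ⟪b, δ2 c⟫)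
    (c : ℝ) (b : V1) :
    ⟪b, δ2 (d1 b) + d0 (δ1 b) + c • b⟫ = ‖d1 b‖ ^ 2 + ‖δ1 b‖ ^ 2 + c * ‖b‖ ^ 2 := by
  rw [add_right_comm, inner_add_right, inner_adjoint_apply_add_smul_self hadj1,
    inner_apply_adjoint_self hadj0]
  ring

theorem stmt6 {V0 V1 V2 : Type*}
    [NormedAddCommGroup V0] [InnerProductSpace ℝ V0]
    [NormedAddCommGroup V1] [InnerProductSpace ℝ V1]
    [NormedAddCommGroup V2] [InnerProductSpace ℝ V2]
    (d0 : V0 →ₗ[ℝ] V1) (d1 : V1 →ₗ[ℝ] V2)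
    (δ1 : V1 →ₗ[ℝ] V0) (δ2 : V2 →ₗ[ℝ] V1)
    (hadj0 : ∀ (a : V0) (b : V1), ⟪d0 a, b⟫ = ⟪a, δ1 b⟫)
    (hadj1 : ∀ (b : V1) (c : V2), ⟪d1 b, c⟫ = ⟪b, δ2 c⟫)
    (m : ℝ) (a0 π0 : V0) (a1 π1 : V1)
    (hc1 : π0 = - δ1 a1)
    (hc2 : δ1 (d0 a0) + m ^ 2 • a0 = δ1 π1) :
    ⟪π1, π1⟫ + ⟪a1, δ2 (d1 a1) + d0 (δ1 a1) + m ^ 2 • a1⟫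
        - ⟪π0, π0⟫ - ⟪a0, δ1 (d0 a0) + m ^ 2 • a0⟫
      = ‖π1 - d0 a0‖ ^ 2 + ‖d1 a1‖ ^ 2 + m ^ 2 * (‖a1‖ ^ 2 + ‖a0‖ ^ 2) ∧
    0 ≤ ⟪π1, π1⟫ + ⟪a1, δ2 (d1 a1) + d0 (δ1 a1) + m ^ 2 • a1⟫
        - ⟪π0, π0⟫ - ⟪a0, δ1 (d0 a0) + m ^ 2 • a0⟫ := by
  have hscalar := inner_adjoint_apply_add_smul_self hadj0 (m ^ 2) a0
  have hvector := inner_hodgeLaplacian_add_smul_self hadj0 hadj1 (m ^ 2) a1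
  have hπ0 : ⟪π0, π0⟫ = ‖δ1 a1‖ ^ 2 := by
    rw [hc1, inner_neg_neg, real_inner_self_eq_norm_sq]
  -- the second constraint makes the cross term of ‖π1 - d0 a0‖² the scalar energy of a0
  have hcross : ⟪π1, d0 a0⟫ = ‖d0 a0‖ ^ 2 + m ^ 2 * ‖a0‖ ^ 2 := by
    rw [real_inner_comm, hadj0, ← hc2, hscalar]
  have henergy : ⟪π1, π1⟫ + ⟪a1, δ2 (d1 a1) + d0 (δ1 a1) + m ^ 2 • a1⟫
        - ⟪π0, π0⟫ - ⟪a0, δ1 (d0 a0) + m ^ 2 • a0⟫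
      = ‖π1 - d0 a0‖ ^ 2 + ‖d1 a1‖ ^ 2 + m ^ 2 * (‖a1‖ ^ 2 + ‖a0‖ ^ 2) := by
    rw [hvector, hscalar, hπ0, real_inner_self_eq_norm_sq, norm_sub_sq_real, hcross]
    ring
  exact ⟨henergy, henergy ▸ by positivity⟩
end

section
/- Let H be a complex Hilbert space, T a (possibly unbounded) selfadjoint operator with T ≥ c·id for some c > 0 (so T^α is defined for all α ∈ ℝ by the functional calculus and T⁻¹ ∈ B(H)), and D a closed densely defined operator with T⁻¹ D ⊆ D T⁻¹ (for x ∈ dom D: T⁻¹x ∈ dom D and D T⁻¹ x = T⁻¹ D x). Then for every α ≤ 0 and every x ∈ dom(D): T^α x ∈ dom(D) and D(T^α x) = T^α (D x). -/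
/-!
The bounded operators `B` with `B (graph D) ⊆ graph D` form a subalgebra, which is norm closed
because `graph D` is closed. It contains the selfadjoint operator `T⁻¹`, so it contains every
`cfc f T⁻¹`: these lie in the closure of the real polynomials in `T⁻¹`.
-/

theorem IsSelfAdjoint.cfc_mem {A : Type*} [Ring A] [StarRing A] [Algebra ℝ A] [TopologicalSpace A]
    [StarModule ℝ A] [IsTopologicalRing A] [ContinuousStar A]
    [ContinuousFunctionalCalculus ℝ A IsSelfAdjoint]
    {s : Subalgebra ℝ A} (hs : IsClosed (s : Set A)) {a : A} (ha : IsSelfAdjoint a)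
    (has : a ∈ s) (f : ℝ → ℝ) : cfc f a ∈ s := by
  refine StarAlgebra.elemental.induction_on ℝ (P := fun u _ => u ∈ s) (cfc_mem_elemental f a)
    has (by rwa [ha.star_eq]) s.algebraMap_mem (fun _ _ _ _ => s.add_mem)
    (fun _ _ _ _ => s.mul_mem) fun t _ ht _ hv => closure_minimal ht hs hv

namespace LinearPMap

variable {𝕜 E : Type*} [NontriviallyNormedField 𝕜] [NormedAddCommGroup E] [NormedSpace 𝕜 E]

def graphStabilizer (f : E →ₗ.[𝕜] E) : Subalgebra 𝕜 (E →L[𝕜] E) where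
  carrier := {B | ∀ p ∈ f.graph, (B p.1, B p.2) ∈ f.graph}
  mul_mem' hA hB p hp := hA _ (hB p hp)
  one_mem' _ hp := hp
  add_mem' hA hB p hp := f.graph.add_mem (hA p hp) (hB p hp)
  zero_mem' _ _ := f.graph.zero_mem
  algebraMap_mem' r _ hp := f.graph.smul_mem r hp

theorem mem_graphStabilizer_iff {f : E →ₗ.[𝕜] E} {B : E →L[𝕜] E} :
    B ∈ f.graphStabilizer ↔
      ∀ (x : E) (hx : x ∈ f.domain), ∃ h : B x ∈ f.domain, f ⟨B x, h⟩ = B (f ⟨x, hx⟩) := by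
  constructor
  · intro hB x hx
    obtain ⟨⟨y, hy⟩, rfl : y = B x, hfy⟩ := f.mem_graph_iff.mp (hB _ (f.mem_graph ⟨x, hx⟩))
    exact ⟨hy, hfy⟩
  · rintro hB ⟨_, _⟩ hp
    obtain ⟨x, rfl, rfl⟩ := f.mem_graph_iff.mp hp
    obtain ⟨h, hfB⟩ := hB x x.2
    exact f.mem_graph_iff.mpr ⟨⟨B x, h⟩, rfl, hfB⟩

theorem isClosed_graphStabilizer {f : E →ₗ.[𝕜] E}
    (hf : _root_.IsClosed (f.graph : Set (E × E))) :
    _root_.IsClosed (f.graphStabilizer : Set (E →L[𝕜] E)) := by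
  have : (f.graphStabilizer : Set (E →L[𝕜] E)) =
      ⋂ p ∈ f.graph, (fun B : E →L[𝕜] E => (B p.1, B p.2)) ⁻¹' f.graph := by
    ext; simp [graphStabilizer]
  rw [this]
  exact isClosed_biInter fun p _ =>
    hf.preimage (((ContinuousLinearMap.apply 𝕜 E p.1).continuous).prodMk
      (ContinuousLinearMap.apply 𝕜 E p.2).continuous)

end LinearPMap

theorem stmt18_general {H : Type*} [NormedAddCommGroup H] [InnerProductSpace ℂ H] [CompleteSpace H]
    (Tinv : H →L[ℂ] H) (hTinvsa : IsSelfAdjoint Tinv)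
    (D : H →ₗ.[ℂ] H)
    (hDclosed : IsClosed (D.graph : Set (H × H)))
    (hcomm : ∀ (x : H) (hx : x ∈ D.domain),
      ∃ h : Tinv x ∈ D.domain, D ⟨Tinv x, h⟩ = Tinv (D ⟨x, hx⟩)) :
    ∀ α : ℝ, α ≤ 0 →
      ∀ (x : H) (hx : x ∈ D.domain),
        ∃ h : cfc (fun t : ℝ => t ^ (-α)) Tinv x ∈ D.domain,
          D ⟨cfc (fun t : ℝ => t ^ (-α)) Tinv x, h⟩
            = cfc (fun t : ℝ => t ^ (-α)) Tinv (D ⟨x, hx⟩) := by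
  intro α _
  have hTinv : Tinv ∈ D.graphStabilizer.restrictScalars ℝ :=
    LinearPMap.mem_graphStabilizer_iff.mpr hcomm
  exact LinearPMap.mem_graphStabilizer_iff.mp <|
    hTinvsa.cfc_mem (LinearPMap.isClosed_graphStabilizer hDclosed) hTinv _

/-- Let `T` be a selfadjoint operator with `T ≥ c > 0`, with bounded (selfadjoint,
positive) inverse `Tinv`, and let `D` be a closed densely defined operator with
`T⁻¹ D ⊆ D T⁻¹`. Then for every `α ≤ 0`, the power `T^α = (T⁻¹)^(−α)` (defined via the
functional calculus applied to the bounded operator `Tinv`) satisfies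
`T^α D ⊆ D T^α`, i.e. for `x ∈ dom D`, `T^α x ∈ dom D` and `D (T^α x) = T^α (D x)`. -/
theorem stmt18 {H : Type*} [NormedAddCommGroup H] [InnerProductSpace ℂ H] [CompleteSpace H]
    (T : H →ₗ.[ℂ] H) (hTsa : IsSelfAdjoint T)
    (c : ℝ) (hc : 0 < c)
    (hlower : ∀ x : T.domain, c * ‖(x : H)‖ ^ 2 ≤ (inner ℂ (x : H) (T x) : ℂ).re)
    (Tinv : H →L[ℂ] H) (hTinvsa : IsSelfAdjoint Tinv)
    (hTinv_right : ∀ y : H, ∃ h : Tinv y ∈ T.domain, T ⟨Tinv y, h⟩ = y)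
    (hTinv_left : ∀ x : T.domain, Tinv (T x) = (x : H))
    (D : H →ₗ.[ℂ] H) (hDdense : Dense (D.domain : Set H))
    (hDclosed : IsClosed (D.graph : Set (H × H)))
    (hcomm : ∀ (x : H) (hx : x ∈ D.domain),
      ∃ h : Tinv x ∈ D.domain, D ⟨Tinv x, h⟩ = Tinv (D ⟨x, hx⟩)) :
    ∀ α : ℝ, α ≤ 0 →
      ∀ (x : H) (hx : x ∈ D.domain),
        ∃ h : cfc (fun t : ℝ => t ^ (-α)) Tinv x ∈ D.domain,
          D ⟨cfc (fun t : ℝ => t ^ (-α)) Tinv x, h⟩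
            = cfc (fun t : ℝ => t ^ (-α)) Tinv (D ⟨x, hx⟩) :=
  stmt18_general Tinv hTinvsa D hDclosed hcomm
end
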